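/- Let Λ = (λ_k)_{k≥0} be a strictly increasing sequence of positive real numbers satisfying the Müntz condition Σ_k 1/λ_k < ∞, and let V_Λ : M_Λ^1 → C([0,1]) be the restriction of the Volterra operator, (V_Λ f)(x) = ∫_0^x f(t) dt. Then the essential norm of V_Λ equals 1/2: inf{‖V_Λ − S‖ : S : M_Λ^1 → C([0,1]) compact bounded linear operator} = 1/2. -/

import Mathlib

/-!
Upper bound: the rank-one operator `f ↦ (∫₀¹ f) / 2` is within `1/2` of `V`, because
`V f x - (∫₀¹ f) / 2 = (∫₀ˣ f - ∫ₓ¹ f) / 2`.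

Lower bound: the unit vectors `g k = (λ_k + 1) t ^ λ_k` of `M_Λ^1` have `V (g k) = x ^ (λ_k + 1)`.
As `λ_k → ∞`, for fixed `a` the sup norm of `V (g a - g b)` tends to `1` when `b → ∞`. A compact
`S` maps a subsequence of `g` to a Cauchy sequence, so choosing `a, b` far along it gives
`1 - ε ≤ ‖(V - S) (g a - g b)‖ + ε ≤ 2 ‖V - S‖ + ε`.
-/

open MeasureTheory Set

/-- Lebesgue measure restricted to `[0,1]`. -/
noncomputable def mu01 : Measure ℝ := volume.restrict (Icc (0:ℝ) 1)

/-- The Müntz space `M_Λ^1`: the closure in `L¹([0,1])` of the linear span of the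
monomials `t ↦ t ^ Λ k`. -/
noncomputable def muntzSpace (Λ : ℕ → ℝ) : Submodule ℝ (Lp ℝ 1 mu01) :=
  (Submodule.span ℝ {f : Lp ℝ 1 mu01 |
    ∃ k : ℕ, (f : ℝ → ℝ) =ᵐ[mu01] fun t => t ^ Λ k}).topologicalClosure

open Filter

section HalfIntegral

variable {α : Type*} [MeasurableSpace α] {μ : Measure α}

theorem norm_setIntegral_sub_half_integral_le {f : α → ℝ} (hf : Integrable f μ) {s : Set α}
    (hs : MeasurableSet s) :
    ‖∫ t in s, f t ∂μ - 2⁻¹ * ∫ t, f t ∂μ‖ ≤ 2⁻¹ * ∫ t, ‖f t‖ ∂μ := by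
  rw [← integral_add_compl hs hf, ← integral_add_compl hs hf.norm]
  have h_in := norm_integral_le_integral_norm (μ := μ.restrict s) f
  have h_out := norm_integral_le_integral_norm (μ := μ.restrict sᶜ) f
  simp only [Real.norm_eq_abs, abs_le] at *
  constructor <;> linarith

theorem exists_isCompactOperator_norm_sub_setIntegral_le_half {X : Type*} [TopologicalSpace X]
    [CompactSpace X] (E : Submodule ℝ (Lp ℝ 1 μ)) (s : X → Set α) (hs : ∀ x, MeasurableSet (s x))
    (V : E →L[ℝ] C(X, ℝ)) (hV : ∀ f x, V f x = ∫ t in s x, (f : Lp ℝ 1 μ) t ∂μ) :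
    ∃ S : E →L[ℝ] C(X, ℝ), IsCompactOperator S ∧ ‖V - S‖ ≤ 1 / 2 := by
  let half : ℝ →L[ℝ] C(X, ℝ) := ContinuousLinearMap.toSpanSingleton ℝ ((2⁻¹ : ℝ) • 1)
  let S := half.comp (L1.integralCLM.comp E.subtypeL)
  refine ⟨S, (isCompactOperator_of_locallyCompactSpace_rng half).comp_clm _, ?_⟩
  refine ContinuousLinearMap.opNorm_le_bound _ (by norm_num) fun f =>
    (ContinuousMap.norm_le _ (by positivity)).2 fun x => ?_
  have hS : S f x = 2⁻¹ * ∫ t, (f : Lp ℝ 1 μ) t ∂μ := by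
    simp [S, half, ← L1.integral_eq, L1.integral_eq_integral, mul_comm]
  rw [sub_apply, ContinuousMap.sub_apply, hV, hS, Submodule.coe_norm,
    L1.norm_eq_integral_norm, one_div]
  exact norm_setIntegral_sub_half_integral_le (L1.integrable_coeFn _) (hs x)

end HalfIntegral

theorem le_two_mul_norm_sub_of_isCompactOperator {𝕜 E F : Type*} [NontriviallyNormedField 𝕜]
    [NormedAddCommGroup E] [NormedSpace 𝕜 E] [NormedAddCommGroup F] [NormedSpace 𝕜 F]
    {T S : E →L[𝕜] F} (hS : IsCompactOperator S) {g : ℕ → E} (hg : ∀ n, ‖g n‖ ≤ 1) {c : ℝ}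
    (hsep : ∀ a, ∀ δ < c, ∀ᶠ b in atTop, δ ≤ ‖T (g a - g b)‖) : c ≤ 2 * ‖T - S‖ := by
  obtain ⟨y, -, φ, hφ, hy⟩ := (hS.isCompact_closure_image_closedBall 1).tendsto_subseq
    fun n => subset_closure ⟨g n, mem_closedBall_zero_iff.2 (hg n), rfl⟩
  refine le_of_forall_pos_le_add fun ε hε => ?_
  obtain ⟨N, hN⟩ := Metric.cauchySeq_iff'.1 hy.cauchySeq (ε / 2) (half_pos hε)
  obtain ⟨m, hmN, hsepm⟩ := ((eventually_ge_atTop N).and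
    (hφ.tendsto_atTop.eventually (hsep (φ N) (c - ε / 2) (by linarith)))).exists
  have hS_close : ‖S (g (φ m)) - S (g (φ N))‖ < ε / 2 := by
    simpa [dist_eq_norm] using hN m hmN
  have hg_sub : ‖g (φ N) - g (φ m)‖ ≤ 2 := by
    linarith [norm_sub_le (g (φ N)) (g (φ m)), hg (φ N), hg (φ m)]
  calc c ≤ ‖T (g (φ N) - g (φ m))‖ + ε / 2 := by linarith
    _ = ‖(T - S) (g (φ N) - g (φ m)) + (S (g (φ N)) - S (g (φ m)))‖ + ε / 2 := by simp
    _ ≤ ‖T - S‖ * 2 + ε / 2 + ε / 2 := by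
        grw [norm_add_le, (T - S).le_opNorm_of_le hg_sub, norm_sub_rev (S _), hS_close]
    _ = 2 * ‖T - S‖ + ε := by ring

section Monomials

instance : IsFiniteMeasure mu01 := by
  rw [mu01]
  infer_instance

theorem ae_mem_Icc_mu01 : ∀ᵐ t ∂mu01, t ∈ Icc (0:ℝ) 1 :=
  ae_restrict_mem measurableSet_Icc

theorem setIntegral_Ioc_zero_one_mu01 (f : ℝ → ℝ) :
    ∫ t in Ioc (0:ℝ) 1, f t ∂mu01 = ∫ t, f t ∂mu01 := by
  rw [Measure.restrict_congr_set (μ := mu01) (ae_restrict_of_ae Ioc_ae_eq_Icc),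
    Measure.restrict_eq_self_of_ae_mem ae_mem_Icc_mu01]

theorem setIntegral_rpow_mu01 {p x : ℝ} (hp : -1 < p) (hx : x ∈ Icc (0:ℝ) 1) :
    ∫ t in Ioc (0:ℝ) x, t ^ p ∂mu01 = x ^ (p + 1) / (p + 1) := by
  rw [mu01, Measure.restrict_restrict measurableSet_Ioc,
    inter_eq_self_of_subset_left (Ioc_subset_Icc_self.trans (Icc_subset_Icc_right hx.2)),
    ← intervalIntegral.integral_of_le hx.1, integral_rpow (Or.inl hp),
    Real.zero_rpow (by linarith), sub_zero]

theorem memLp_rpow_mu01 {p : ℝ} (hp : 0 ≤ p) : MemLp (fun t : ℝ => t ^ p) 1 mu01 := by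
  refine MemLp.of_bound (measurable_id.pow_const p).aestronglyMeasurable 1 ?_
  filter_upwards [ae_mem_Icc_mu01] with t ht
  rw [Real.norm_eq_abs, abs_of_nonneg (Real.rpow_nonneg ht.1 p)]
  exact Real.rpow_le_one ht.1 ht.2 hp

noncomputable def rpowL1 {p : ℝ} (hp : 0 ≤ p) : Lp ℝ 1 mu01 := (memLp_rpow_mu01 hp).toLp _

variable {p : ℝ} (hp : 0 ≤ p)

theorem coeFn_rpowL1 : rpowL1 hp =ᵐ[mu01] fun t => t ^ p := (memLp_rpow_mu01 hp).coeFn_toLp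

theorem setIntegral_rpowL1 {x : ℝ} (hx : x ∈ Icc (0:ℝ) 1) :
    ∫ t in Ioc (0:ℝ) x, rpowL1 hp t ∂mu01 = x ^ (p + 1) / (p + 1) := by
  rw [integral_congr_ae (ae_restrict_of_ae (coeFn_rpowL1 hp)),
    setIntegral_rpow_mu01 (by linarith) hx]

theorem norm_rpowL1 : ‖rpowL1 hp‖ = (p + 1)⁻¹ := by
  have hnorm : (fun t => ‖rpowL1 hp t‖) =ᵐ[mu01] fun t => rpowL1 hp t := by
    filter_upwards [coeFn_rpowL1 hp, ae_mem_Icc_mu01] with t ht htI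
    rw [ht, Real.norm_eq_abs, abs_of_nonneg (Real.rpow_nonneg htI.1 _)]
  rw [L1.norm_eq_integral_norm, integral_congr_ae hnorm, ← setIntegral_Ioc_zero_one_mu01,
    setIntegral_rpowL1 hp ⟨zero_le_one, le_rfl⟩, Real.one_rpow, one_div]

theorem rpowL1_mem_muntzSpace {Λ : ℕ → ℝ} (k : ℕ) (hk : 0 ≤ Λ k) :
    rpowL1 hk ∈ muntzSpace Λ :=
  Submodule.le_topologicalClosure _ (Submodule.subset_span ⟨k, coeFn_rpowL1 hk⟩)

end Monomials

theorem eventually_exists_le_rpow_sub_rpow {p δ : ℝ} (hp : 0 < p) (hδ : δ < 1) :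
    ∀ᶠ q : ℝ in atTop, ∃ x ∈ Icc (0:ℝ) 1, δ ≤ x ^ p - x ^ q := by
  obtain ⟨y, hy, hy₁⟩ := exists_between (max_lt hδ one_pos)
  obtain ⟨hδy, hy₀⟩ := max_lt_iff.1 hy
  have hx₀ : 0 < y ^ p⁻¹ := Real.rpow_pos_of_pos hy₀ _
  have hx₁ : y ^ p⁻¹ < 1 := Real.rpow_lt_one hy₀.le hy₁ (inv_pos.2 hp)
  filter_upwards [(tendsto_rpow_atTop_of_base_lt_one _ (by linarith) hx₁).eventually
    (gt_mem_nhds (sub_pos.2 hδy))] with q hq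
  refine ⟨y ^ p⁻¹, ⟨hx₀.le, hx₁.le⟩, ?_⟩
  rw [Real.rpow_inv_rpow hy₀.le hp.ne']
  linarith

theorem exists_norm_eq_one_volterra_eq_rpow (Λ : ℕ → ℝ) (hΛ : ∀ k, 0 ≤ Λ k)
    (V : muntzSpace Λ →L[ℝ] C(Icc (0:ℝ) 1, ℝ))
    (hV : ∀ (f : muntzSpace Λ) (x : Icc (0:ℝ) 1),
      V f x = ∫ t in Ioc (0:ℝ) (x:ℝ), ((f : Lp ℝ 1 mu01) : ℝ → ℝ) t ∂mu01) :
    ∃ g : ℕ → muntzSpace Λ, (∀ k, ‖g k‖ = 1) ∧ ∀ k (x : Icc (0:ℝ) 1),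
      V (g k) x = (x : ℝ) ^ (Λ k + 1) := by
  refine ⟨fun k => (Λ k + 1) • ⟨rpowL1 (hΛ k), rpowL1_mem_muntzSpace k (hΛ k)⟩, fun k => ?_,
    fun k x => ?_⟩
  · have hk : 0 < Λ k + 1 := by linarith [hΛ k]
    rw [norm_smul, Submodule.coe_norm, norm_rpowL1, Real.norm_of_nonneg hk.le,
      mul_inv_cancel₀ hk.ne']
  · have hk : Λ k + 1 ≠ 0 := by linarith [hΛ k]
    rw [map_smul, ContinuousMap.smul_apply, hV, smul_eq_mul, Submodule.coe_mk (p := muntzSpace Λ),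
      setIntegral_rpowL1 _ x.2, mul_div_cancel₀ _ hk]

theorem half_le_norm_volterra_sub_of_isCompactOperator (Λ : ℕ → ℝ) (hΛ : ∀ k, 0 ≤ Λ k)
    (hΛ_tendsto : Tendsto Λ atTop atTop) (V : muntzSpace Λ →L[ℝ] C(Icc (0:ℝ) 1, ℝ))
    (hV : ∀ (f : muntzSpace Λ) (x : Icc (0:ℝ) 1),
      V f x = ∫ t in Ioc (0:ℝ) (x:ℝ), ((f : Lp ℝ 1 mu01) : ℝ → ℝ) t ∂mu01)
    {S : muntzSpace Λ →L[ℝ] C(Icc (0:ℝ) 1, ℝ)} (hS : IsCompactOperator S) :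
    1 / 2 ≤ ‖V - S‖ := by
  obtain ⟨g, hg_norm, hVg⟩ := exists_norm_eq_one_volterra_eq_rpow Λ hΛ V hV
  have hsep : ∀ a, ∀ δ < 1, ∀ᶠ b in atTop, δ ≤ ‖V (g a - g b)‖ := by
    intro a δ hδ
    have hp : 0 < Λ a + 1 := by linarith [hΛ a]
    filter_upwards [(tendsto_atTop_add_const_right _ 1 hΛ_tendsto).eventually
      (eventually_exists_le_rpow_sub_rpow hp hδ)] with b ⟨x, hx, hδx⟩
    calc δ ≤ V (g a - g b) ⟨x, hx⟩ := by simpa [hVg] using hδx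
      _ ≤ ‖V (g a - g b)‖ := (le_abs_self _).trans ((V (g a - g b)).norm_coe_le_norm ⟨x, hx⟩)
  linarith [le_two_mul_norm_sub_of_isCompactOperator hS (fun n => (hg_norm n).le) hsep]

theorem volterra_restriction_essentialNorm_eq_half_general
    (Λ : ℕ → ℝ) (hpos : ∀ k, 0 < Λ k)
    (hmuntz : Summable fun k => 1 / Λ k)
    (V : ↥(muntzSpace Λ) →L[ℝ] C(Icc (0:ℝ) 1, ℝ))
    (hV : ∀ (f : ↥(muntzSpace Λ)) (x : Icc (0:ℝ) 1),
      V f x = ∫ t in Ioc (0:ℝ) (x:ℝ), ((f : Lp ℝ 1 mu01) : ℝ → ℝ) t ∂mu01) :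
    sInf {c : ℝ | ∃ S : ↥(muntzSpace Λ) →L[ℝ] C(Icc (0:ℝ) 1, ℝ),
      IsCompactOperator ⇑S ∧ c = ‖V - S‖} = 1/2 := by
  have hΛ_tendsto : Tendsto Λ atTop atTop :=
    Summable.tendsto_atTop_of_pos (hmuntz.congr fun k => one_div (Λ k)) hpos
  have hlower (S : muntzSpace Λ →L[ℝ] C(Icc (0:ℝ) 1, ℝ)) (hS : IsCompactOperator S) :
      1 / 2 ≤ ‖V - S‖ :=
    half_le_norm_volterra_sub_of_isCompactOperator Λ (fun k => (hpos k).le) hΛ_tendsto V hV hS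
  obtain ⟨S₀, hS₀, hS₀_le⟩ := exists_isCompactOperator_norm_sub_setIntegral_le_half
    (muntzSpace Λ) (fun x : Icc (0:ℝ) 1 => Ioc 0 (x : ℝ)) (fun _ => measurableSet_Ioc) V hV
  refine IsLeast.csInf_eq ⟨⟨S₀, hS₀, (hS₀_le.antisymm (hlower S₀ hS₀)).symm⟩, ?_⟩
  rintro c ⟨S, hS, rfl⟩
  exact hlower S hS

/-- Under the Müntz condition, the essential norm of the restricted
Volterra operator `V_Λ : M_Λ^1 → C([0,1])` equals `1/2`. -/
theorem volterra_restriction_essentialNorm_eq_half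
    (Λ : ℕ → ℝ) (hmono : StrictMono Λ) (hpos : ∀ k, 0 < Λ k)
    (hmuntz : Summable fun k => 1 / Λ k)
    (V : ↥(muntzSpace Λ) →L[ℝ] C(Icc (0:ℝ) 1, ℝ))
    (hV : ∀ (f : ↥(muntzSpace Λ)) (x : Icc (0:ℝ) 1),
      V f x = ∫ t in Ioc (0:ℝ) (x:ℝ), ((f : Lp ℝ 1 mu01) : ℝ → ℝ) t ∂mu01) :
    sInf {c : ℝ | ∃ S : ↥(muntzSpace Λ) →L[ℝ] C(Icc (0:ℝ) 1, ℝ),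
      IsCompactOperator ⇑S ∧ c = ‖V - S‖} = 1/2 :=
  volterra_restriction_essentialNorm_eq_half_general Λ hpos hmuntz V hV
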